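/- arXiv:2206.12075 — 9 statements merged into one kernel-verified Lean document; each statement's English description precedes it below -/
import Mathlib

section
/- Let X be a set, E a class of pairs (ξ, x) where ξ is a net in X and x ∈ X, and let E(X) be the topology on X in which U is open iff for every (ξ, x) ∈ E with x ∈ U, the net ξ is eventually in U. Then for every topological space Y, a map f : (X, E(X)) → Y is continuous if and only if for every (ξ, x) ∈ E, the net f ∘ ξ converges to f(x) in Y. -/
/-- A net in `X`: a function from a (nonempty, directed) preordered index type to `X`. -/
structure PNet (X : Type) : Type 1 where
  ι : Type
  le : ι → ι → Prop
  refl : ∀ i, le i i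
  trans : ∀ i j k, le i j → le j k → le i k
  nonempty : Nonempty ι
  directed : ∀ i j, ∃ k, le i k ∧ le j k
  toFun : ι → X

/-- A net is eventually in a set. -/
def PNet.Eventually {X : Type} (n : PNet X) (U : Set X) : Prop :=
  ∃ j, ∀ k, n.le j k → n.toFun k ∈ U

/-- Convergence of a net in a topological space. -/
def PNet.ConvTo {X : Type} [TopologicalSpace X] (n : PNet X) (x : X) : Prop :=
  ∀ U : Set X, IsOpen U → x ∈ U → n.Eventually U

/-- The image of a net under a map. -/
def PNet.map {X Y : Type} (f : X → Y) (n : PNet X) : PNet Y :=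
  ⟨n.ι, n.le, n.refl, n.trans, n.nonempty, n.directed, fun i => f (n.toFun i)⟩

theorem PNet.eventually_map {X Y : Type} (f : X → Y) (n : PNet X) (U : Set Y) :
    (n.map f).Eventually U ↔ n.Eventually (f ⁻¹' U) :=
  Iff.rfl

/-- Let `E(X)` be the topology determined by the convergence class `E`
(`U` open iff for every `(ξ, x) ∈ E` with `x ∈ U`, `ξ` is eventually in `U`).
Then `f : (X, E(X)) → Y` is continuous iff for every `(ξ, x) ∈ E`,
the net `f ∘ ξ` converges to `f x` in `Y`. -/
theorem stmt2 {X Y : Type} [TopologicalSpace Y]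
    (E : Set (PNet X × X)) (T : TopologicalSpace X)
    (hT : ∀ U : Set X, T.IsOpen U ↔ ∀ p ∈ E, p.2 ∈ U → p.1.Eventually U)
    (f : X → Y) :
    @Continuous X Y T _ f ↔ ∀ p ∈ E, (PNet.map f p.1).ConvTo (f p.2) := by
  constructor
  · intro hf p hp U hU hfx
    exact (PNet.eventually_map f p.1 U).mpr ((hT _).mp (hf.isOpen_preimage U hU) p hp hfx)
  · intro h
    exact ⟨fun U hU => (hT _).mpr fun p hp hx =>
      (PNet.eventually_map f p.1 U).mp (h p hp U hU hx)⟩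
end

section
/- Let P be a poset and E a convergence class on P satisfying: (i) for all x ≤ y in P, the pair (constant net y, x) belongs to E; and (ii) every (D, x) ∈ E consists of a directed subset D of P (viewed as a monotone net) and a point x in D^δ, where D^δ is the set of lower bounds of the set of upper bounds of D. Then the specialization order of the topological space (P, E(P)) coincides with the original partial order of P. -/
/-!
Every `E(P)`-open set is an upper set, because `E` contains the constant net at `y` converging to
each `x ≤ y`; so `x ≤ y` implies `y ⤳ x`. Conversely, the complement of `Iic y` is `E(P)`-open:
a net `D` frequently in `Iic y` has `y` as an upper bound, hence every limit `x ∈ D^δ` of `D`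
satisfies `x ≤ y`.
-/

open Set

variable {P : Type*} [Preorder P]

/-- The open sets of the topology `E(P)`. -/
def IsOpenFor (E : Set (Set P × P)) (U : Set P) : Prop :=
  ∀ p ∈ E, p.2 ∈ U → ∃ d ∈ p.1, ∀ e ∈ p.1, d ≤ e → e ∈ U

theorem IsOpenFor.isUpperSet {E : Set (Set P × P)}
    (hconst : ∀ x y : P, x ≤ y → (({y} : Set P), x) ∈ E) {U : Set P} (hU : IsOpenFor E U) :
    IsUpperSet U := by
  intro x y hxy hx
  obtain ⟨d, rfl, hd⟩ := hU _ (hconst x y hxy) hx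
  exact hd d rfl le_rfl

theorem isOpenFor_compl_Iic {E : Set (Set P × P)}
    (hlim : ∀ p ∈ E, p.2 ∈ lowerBounds (upperBounds p.1)) (y : P) : IsOpenFor E (Iic y)ᶜ := by
  rintro ⟨D, x⟩ hp hx
  by_contra! hfreq
  have hy : y ∈ upperBounds D := fun d hd ↦ by
    obtain ⟨e, he, hde, hey⟩ := hfreq d hd
    exact hde.trans (not_not.mp hey)
  exact hx (hlim _ hp hy)

/-- Let `P` be a poset and `E` a convergence class consisting of pairs `(D, x)` of
directed subsets (viewed as monotone nets) and points, such that
(i) for all `x ≤ y`, the pair `({y}, x)` belongs to `E`, and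
(ii) every `(D, x) ∈ E` has `D` directed and `x ∈ D^δ = (D^↑)^↓`.
Then the specialization order of `(P, E(P))` coincides with the order of `P`. -/
theorem stmt4 {P : Type} [PartialOrder P]
    (E : Set (Set P × P))
    (hconst : ∀ x y : P, x ≤ y → (({y} : Set P), x) ∈ E)
    (hdir : ∀ p ∈ E, (p.1.Nonempty ∧ DirectedOn (· ≤ ·) p.1) ∧
      p.2 ∈ lowerBounds (upperBounds p.1))
    (T : TopologicalSpace P)
    (hT : ∀ U : Set P, T.IsOpen U ↔
      ∀ p ∈ E, p.2 ∈ U → ∃ d ∈ p.1, ∀ e ∈ p.1, d ≤ e → e ∈ U) :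
    ∀ x y : P, x ∈ @closure P T {y} ↔ x ≤ y := by
  intro x y
  rw [← specializes_iff_mem_closure, specializes_iff_forall_open]
  constructor
  · intro h
    by_contra hxy
    exact h _ ((hT _).2 (isOpenFor_compl_Iic (fun p hp ↦ (hdir p hp).2) y)) hxy le_rfl
  · intro hxy U hU hx
    exact IsOpenFor.isUpperSet hconst ((hT U).1 hU) hxy hx
end

section
/- Let D be a directed poset, ∞ a point not in D, and β_D the topology on D ∪ {∞} generated by the subbase consisting of all sets ↑x and ↑x ∪ {∞} for x ∈ D. Then (D ∪ {∞}, β_D) is a locally compact topological space. -/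
/-- The subbase for the topology `β_D` on `D ∪ {∞}` (modelled as `Option D`, with
`∞ = none`): all sets `↑x` and `↑x ∪ {∞}` for `x ∈ D`. -/
def betaSub (D : Type) [Preorder D] : Set (Set (Option D)) :=
  {s | ∃ x : D, s = some '' Set.Ici x ∨ s = insert none (some '' Set.Ici x)}

open TopologicalSpace

lemma upOpen {D : Type} [Preorder D] {U : Set (Option D)}
    (hU : GenerateOpen (betaSub D) U) :
    ∀ x : D, some x ∈ U → some '' Set.Ici x ⊆ U := by
  induction hU with
  | basic s hs =>
    obtain ⟨a, h | h⟩ := hs <;> subst h <;> intro x hx y hy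
    · obtain ⟨w, hw, rfl⟩ := hy
      obtain ⟨v, hv, hvx⟩ := hx
      exact ⟨w, le_trans ((Option.some_injective D hvx) ▸ hv) hw, rfl⟩
    · obtain ⟨w, hw, rfl⟩ := hy
      rcases hx with hx | hx
      · exact absurd hx (by simp)
      · obtain ⟨v, hv, hvx⟩ := hx
        exact Set.mem_insert_of_mem _
          ⟨w, le_trans ((Option.some_injective D hvx) ▸ hv) hw, rfl⟩
  | univ => intro x _; exact Set.subset_univ _
  | inter U V _ _ ihU ihV =>
    intro x hx
    exact Set.subset_inter (ihU x hx.1) (ihV x hx.2)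
  | sUnion S _ ih =>
    intro x hx
    obtain ⟨t, ht, hxt⟩ := hx
    exact (ih t ht x hxt).trans (Set.subset_sUnion_of_mem ht)

lemma noneOpen {D : Type} [Preorder D] [Nonempty D]
    (hdir : ∀ a b : D, ∃ c, a ≤ c ∧ b ≤ c) {U : Set (Option D)}
    (hU : GenerateOpen (betaSub D) U) :
    none ∈ U → ∃ c : D, insert none (some '' Set.Ici c) ⊆ U := by
  induction hU with
  | basic s hs =>
    obtain ⟨a, h | h⟩ := hs <;> subst h <;> intro hn
    · exact absurd hn (by simp)
    · exact ⟨a, le_refl _⟩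
  | univ => exact fun _ => ⟨Classical.arbitrary D, Set.subset_univ _⟩
  | inter U V _ _ ihU ihV =>
    intro hn
    obtain ⟨c1, h1⟩ := ihU hn.1
    obtain ⟨c2, h2⟩ := ihV hn.2
    obtain ⟨c, hc1, hc2⟩ := hdir c1 c2
    refine ⟨c, Set.subset_inter (le_trans ?_ h1) (le_trans ?_ h2)⟩
    · exact Set.insert_subset_insert (Set.image_mono (Set.Ici_subset_Ici.2 hc1))
    · exact Set.insert_subset_insert (Set.image_mono (Set.Ici_subset_Ici.2 hc2))
  | sUnion S _ ih =>
    intro hn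
    obtain ⟨t, ht, hxt⟩ := hn
    obtain ⟨c, hc⟩ := ih t ht hxt
    exact ⟨c, hc.trans (Set.subset_sUnion_of_mem ht)⟩

/-- For a directed poset `D`, the space `(D ∪ {∞}, β_D)` is locally compact. -/
theorem stmt6 {D : Type} [PartialOrder D] [Nonempty D]
    (hdir : ∀ a b : D, ∃ c, a ≤ c ∧ b ≤ c) :
    @LocallyCompactSpace (Option D) (TopologicalSpace.generateFrom (betaSub D)) := by
  letI : TopologicalSpace (Option D) := generateFrom (betaSub D)
  have hopen : ∀ s ∈ betaSub D, IsOpen s := fun s hs => GenerateOpen.basic s hs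
  have hcomp1 : ∀ x : D, IsCompact (some '' Set.Ici x) := by
    intro x
    apply isCompact_of_finite_subcover
    intro ι U hUo hcover
    obtain ⟨i, hi⟩ := Set.mem_iUnion.1 (hcover ⟨x, le_refl x, rfl⟩)
    exact ⟨{i}, by simpa using upOpen (hUo i) x hi⟩
  have hcomp2 : ∀ c : D, IsCompact (insert none (some '' Set.Ici c)) := by
    intro c
    apply isCompact_of_finite_subcover
    intro ι U hUo hcover
    classical
    obtain ⟨i, hi⟩ := Set.mem_iUnion.1 (hcover (Set.mem_insert _ _))
    obtain ⟨j, hj⟩ := Set.mem_iUnion.1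
      (hcover (Set.mem_insert_of_mem _ ⟨c, le_refl c, rfl⟩))
    refine ⟨{i, j}, ?_⟩
    intro y hy
    simp only [Finset.mem_insert, Finset.mem_singleton, Set.mem_iUnion, exists_prop]
    rcases hy with rfl | hy
    · exact ⟨i, Or.inl rfl, hi⟩
    · exact ⟨j, Or.inr rfl, upOpen (hUo j) c hj hy⟩
  constructor
  intro p n hn
  obtain ⟨U, hUn, hUo, hpU⟩ := mem_nhds_iff.1 hn
  cases p with
  | none =>
    obtain ⟨c, hc⟩ := noneOpen hdir hUo hpU
    exact ⟨insert none (some '' Set.Ici c),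
      (hopen _ ⟨c, Or.inr rfl⟩).mem_nhds (Set.mem_insert _ _),
      hc.trans hUn, hcomp2 c⟩
  | some x =>
    exact ⟨some '' Set.Ici x,
      (hopen _ ⟨x, Or.inl rfl⟩).mem_nhds ⟨x, le_refl x, rfl⟩,
      (upOpen hUo x hpU).trans hUn, hcomp1 x⟩
end

section
/- Let P = P_fin(ℝ) be the poset of all finite subsets of the reals, ordered by inclusion, with an added point ∞, and let β_P be the topology on P ∪ {∞} generated by the subbase of all ↑x and ↑x ∪ {∞} for x ∈ P. Then no chain I ⊆ P (a totally ordered directed subset), viewed as a net, converges to ∞ in (P ∪ {∞}, β_P); hence {∞} is open in the topology determined by convergence of chain-indexed nets. -/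
/-- The topology `β_P` on `P_fin(ℝ) ∪ {∞}`, where `P_fin(ℝ)` is the poset of finite
subsets of `ℝ` ordered by inclusion (`Finset ℝ` with `≤` = `⊆`). -/
def betaP : TopologicalSpace (Option (Finset ℝ)) :=
  TopologicalSpace.generateFrom (betaSub (Finset ℝ))

/-- A (nonempty) chain in `P_fin(ℝ)`. -/
def IsChain' (I : Set (Finset ℝ)) : Prop :=
  I.Nonempty ∧ ∀ a ∈ I, ∀ b ∈ I, a ≤ b ∨ b ≤ a

/-- Convergence of a chain `I`, viewed as a monotone net indexed by itself,
to a point of `(P_fin(ℝ) ∪ {∞}, β_P)`. -/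
def chainConv (I : Set (Finset ℝ)) (x : Option (Finset ℝ)) : Prop :=
  ∀ U : Set (Option (Finset ℝ)), betaP.IsOpen U → x ∈ U →
    ∃ a ∈ I, ∀ b ∈ I, a ≤ b → some b ∈ U

lemma chain_countable {I : Set (Finset ℝ)} (hI : IsChain' I) : I.Countable := by
  have hinj : Set.InjOn Finset.card I := by
    intro a ha b hb hab
    rcases hI.2 a ha b hb with h | h
    · exact Finset.eq_of_subset_of_card_le h hab.ge
    · exact (Finset.eq_of_subset_of_card_le h hab.le).symm
  exact Set.countable_of_injective_of_countable_image hinj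
    (Set.to_countable _)

lemma no_conv {I : Set (Finset ℝ)} (hI : IsChain' I) : ¬ chainConv I none := by
  intro hc
  have hScount : (⋃ a ∈ I, (a : Set ℝ)).Countable :=
    Set.Countable.biUnion (chain_countable hI) fun a _ => a.countable_toSet
  obtain ⟨r, hr⟩ : ∃ r : ℝ, r ∉ ⋃ a ∈ I, (a : Set ℝ) := by
    by_contra h
    push_neg at h
    have : (Set.univ : Set ℝ).Countable := by
      refine hScount.mono ?_
      intro x _; exact h x
    exact Cardinal.not_countable_real this
  set U : Set (Option (Finset ℝ)) :=
    insert none (some '' Set.Ici ({r} : Finset ℝ)) with hU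
  have hopen : betaP.IsOpen U :=
    TopologicalSpace.GenerateOpen.basic U ⟨{r}, Or.inr rfl⟩
  obtain ⟨a, haI, ha⟩ := hc U hopen (Set.mem_insert _ _)
  have := ha a haI le_rfl
  rcases this with h | ⟨b, hb, hba⟩
  · exact Option.some_ne_none _ h
  · cases Option.some_injective _ hba
    have : r ∈ a := hb (Finset.mem_singleton_self r)
    exact hr (Set.mem_biUnion haI this)

/-- No chain `I ⊆ P_fin(ℝ)`, viewed as a net, converges to `∞` in
`(P_fin(ℝ) ∪ {∞}, β_P)`; hence `{∞}` is open in the topology determined by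
convergence of chain-indexed nets. -/
theorem stmt9 (T : TopologicalSpace (Option (Finset ℝ)))
    (hT : ∀ U : Set (Option (Finset ℝ)), T.IsOpen U ↔
      ∀ (I : Set (Finset ℝ)) (x : Option (Finset ℝ)), IsChain' I → chainConv I x →
        x ∈ U → ∃ a ∈ I, ∀ b ∈ I, a ≤ b → some b ∈ U) :
    (∀ I : Set (Finset ℝ), IsChain' I → ¬ chainConv I none) ∧
    T.IsOpen {none} := by
  refine ⟨fun I hI => no_conv hI, ?_⟩
  rw [hT]
  intro I x hI hc hx
  rw [Set.mem_singleton_iff] at hx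
  subst hx
  exact absurd hc (no_conv hI)
end

section
/- For a poset P, the Scott topology equals the weak Scott topology σ₂(P) if and only if for every directed subset D of P, the Scott closure of D equals D^δ, the set of lower bounds of the set of upper bounds of D. -/
/-!
Every `σ₂`-open set is Scott open, because the supremum of a directed set `D` lies in `D^δ`.
The set `D^δ` is `σ₂`-closed for every `D` (its complement is inaccessible: if a directed `E`
lay inside `D^δ`, so would `E^δ`), and every `σ₂`-open set meeting `D^δ` meets `D`; hence
the `σ₂`-closure of a directed `D` is exactly `D^δ`. Conversely, if the Scott closure of each
directed `D` is `D^δ`, then every Scott open set meeting `D^δ` meets `D`, i.e. is `σ₂`-open.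
-/

open Set Topology

variable {α : Type*} [Preorder α]

/-- The analogue of `DirSupInacc` for the weak Scott topology `σ₂`, with the supremum of a
directed set `d` replaced by its cut `d^δ = lowerBounds (upperBounds d)`. -/
def DirCutInacc (s : Set α) : Prop :=
  ∀ ⦃d : Set α⦄, d.Nonempty → DirectedOn (· ≤ ·) d →
    (lowerBounds (upperBounds d) ∩ s).Nonempty → (d ∩ s).Nonempty

lemma DirCutInacc.dirSupInacc {s : Set α} (hs : DirCutInacc s) : DirSupInacc s :=
  fun _ hd hdir a ha has => hs hd hdir ⟨a, ha.2, has⟩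

lemma isLowerSet_lowerBounds (s : Set α) : IsLowerSet (lowerBounds s) :=
  fun _ _ hba ha _ hx => hba.trans (ha hx)

lemma lowerBounds_upperBounds_subset {s t : Set α} (ht : t ⊆ lowerBounds (upperBounds s)) :
    lowerBounds (upperBounds t) ⊆ lowerBounds (upperBounds s) :=
  fun _ hx _ hu => hx fun _ he => ht he hu

lemma dirCutInacc_compl_lowerBounds_upperBounds (s : Set α) :
    DirCutInacc (lowerBounds (upperBounds s))ᶜ := by
  rintro d - - ⟨a, had, has⟩
  by_contra hdisj
  have hsub : d ⊆ lowerBounds (upperBounds s) := fun e he => by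
    by_contra hes
    exact hdisj ⟨e, he, hes⟩
  exact has (lowerBounds_upperBounds_subset hsub had)

lemma dirCutInacc_of_isOpen {T : TopologicalSpace α}
    (hcl : ∀ d : Set α, d.Nonempty → DirectedOn (· ≤ ·) d →
      lowerBounds (upperBounds d) ⊆ closure[T] d)
    {U : Set α} (hU : IsOpen[T] U) : DirCutInacc U := by
  rintro d hd hdir ⟨x, hxd, hxU⟩
  obtain ⟨y, hyU, hyd⟩ := mem_closure_iff.1 (hcl d hd hdir hxd) U hU hxU
  exact ⟨y, hyd, hyU⟩

section WeakScott

variable {T : TopologicalSpace α} (hT : ∀ U : Set α, IsOpen[T] U ↔ IsUpperSet U ∧ DirCutInacc U)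
include hT

lemma isClosed_lowerBounds_upperBounds_of_weakScott (s : Set α) :
    IsClosed[T] (lowerBounds (upperBounds s)) :=
  ⟨(hT _).2 ⟨(isLowerSet_lowerBounds _).compl, dirCutInacc_compl_lowerBounds_upperBounds s⟩⟩

lemma closure_eq_lowerBounds_upperBounds_of_weakScott {d : Set α} (hd : d.Nonempty)
    (hdir : DirectedOn (· ≤ ·) d) : closure[T] d = lowerBounds (upperBounds d) := by
  refine subset_antisymm ?_ fun x hx => ?_
  · exact (isClosed_lowerBounds_upperBounds_of_weakScott hT d).closure_subset_iff.2
      (subset_lowerBounds_upperBounds d)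
  · refine mem_closure_iff.2 fun U hU hxU => ?_
    obtain ⟨y, hyd, hyU⟩ := ((hT U).1 hU).2 hd hdir ⟨x, hx, hxU⟩
    exact ⟨y, hyU, hyd⟩

lemma scott_le_weakScott {Tσ : TopologicalSpace α}
    (hσ : ∀ U : Set α, IsOpen[Tσ] U ↔ IsUpperSet U ∧ DirSupInacc U) : Tσ ≤ T :=
  TopologicalSpace.le_def.2 fun U hU =>
    have hU' := (hT U).1 hU
    (hσ U).2 ⟨hU'.1, hU'.2.dirSupInacc⟩

lemma weakScott_le_scott_of_closure_eq {Tσ : TopologicalSpace α}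
    (hσ : ∀ U : Set α, IsOpen[Tσ] U ↔ IsUpperSet U ∧ DirSupInacc U)
    (hcl : ∀ d : Set α, d.Nonempty → DirectedOn (· ≤ ·) d →
      closure[Tσ] d = lowerBounds (upperBounds d)) : T ≤ Tσ :=
  TopologicalSpace.le_def.2 fun U hU =>
    (hT U).2 ⟨((hσ U).1 hU).1,
      dirCutInacc_of_isOpen (fun d hd hdir => (hcl d hd hdir).symm.subset) hU⟩

end WeakScott

/-- For a poset `P`, the Scott topology equals the weak Scott topology `σ₂(P)` iff
for every directed subset `D`, the Scott closure of `D` equals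
`D^δ = (D^↑)^↓`, the lower bounds of the upper bounds of `D`. -/
theorem stmt11 {P : Type} [PartialOrder P]
    (Tσ T₂ : TopologicalSpace P)
    (hσ : ∀ U : Set P, Tσ.IsOpen U ↔ (IsUpperSet U ∧
      ∀ D : Set P, D.Nonempty → DirectedOn (· ≤ ·) D →
        ∀ a : P, IsLUB D a → a ∈ U → (D ∩ U).Nonempty))
    (h₂ : ∀ U : Set P, T₂.IsOpen U ↔ (IsUpperSet U ∧
      ∀ D : Set P, D.Nonempty → DirectedOn (· ≤ ·) D →
        (lowerBounds (upperBounds D) ∩ U).Nonempty → (D ∩ U).Nonempty)) :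
    Tσ = T₂ ↔
      ∀ D : Set P, D.Nonempty → DirectedOn (· ≤ ·) D →
        @closure P Tσ D = lowerBounds (upperBounds D) := by
  constructor
  · rintro rfl D hD hdir
    exact closure_eq_lowerBounds_upperBounds_of_weakScott h₂ hD hdir
  · intro hcl
    exact le_antisymm (scott_le_weakScott h₂ hσ) (weakScott_le_scott_of_closure_eq h₂ hσ hcl)
end

section
/- In a poset P, for every directed subset D and every x ∈ D^δ, the monotone net D converges to x in the upper topology υ(P); conversely if D converges to x in the upper topology then x ∈ D^δ. Hence the convergent pairs (D, x) of directed subsets with limits in (P, υ(P)) are exactly {(D, x) : D directed, x ∈ D^δ}. -/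
/-!
Since the tails of a directed set generate a filter, convergence to `x` only has to be tested on
the subbasic open sets `(↓y)ᶜ` containing `x`. The net `D` is eventually outside `↓y` exactly
when some element of `D` is, i.e. when `y` is not an upper bound of `D`; so convergence says that
every upper bound of `D` lies above `x`.
-/

open Filter Topology TopologicalSpace

section DirectedNet

variable {P : Type*} [Preorder P] {D : Set P}

theorem DirectedOn.preimage_val_mem_atTop_iff (hne : D.Nonempty) (hdir : DirectedOn (· ≤ ·) D)
    {U : Set P} :
    (↑) ⁻¹' U ∈ (atTop : Filter D) ↔ ∃ d ∈ D, ∀ e ∈ D, d ≤ e → e ∈ U := by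
  have := hne.to_subtype
  have := hdir.isDirectedOrder
  simp [mem_atTop_sets]

theorem DirectedOn.tendsto_val_atTop_nhds_iff [TopologicalSpace P] (hne : D.Nonempty)
    (hdir : DirectedOn (· ≤ ·) D) {x : P} :
    Tendsto ((↑) : D → P) atTop (𝓝 x) ↔
      ∀ U : Set P, IsOpen U → x ∈ U → ∃ d ∈ D, ∀ e ∈ D, d ≤ e → e ∈ U := by
  simp only [tendsto_nhds, hdir.preimage_val_mem_atTop_iff hne]

theorem exists_tail_not_le_iff_notMem_upperBounds {y : P} :
    (∃ d ∈ D, ∀ e ∈ D, d ≤ e → ¬e ≤ y) ↔ y ∉ upperBounds D := by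
  simp only [upperBounds, Set.mem_ofPred_eq, not_forall, exists_prop]
  exact ⟨fun ⟨d, hd, h⟩ ↦ ⟨d, hd, h d hd le_rfl⟩,
    fun ⟨d, hd, hdy⟩ ↦ ⟨d, hd, fun _ _ hde hey ↦ hdy (hde.trans hey)⟩⟩

end DirectedNet

/-- In a poset `P` with the upper topology `υ(P)` (generated by complements of
principal down-sets), a directed subset `D`, viewed as a monotone net indexed by
itself, converges to `x` iff `x ∈ D^δ = (D^↑)^↓`. -/
theorem stmt12 {P : Type} [PartialOrder P]
    (υ : TopologicalSpace P)
    (hυ : υ = TopologicalSpace.generateFrom {U : Set P | ∃ y : P, U = (Set.Iic y)ᶜ}) :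
    ∀ D : Set P, D.Nonempty → DirectedOn (· ≤ ·) D → ∀ x : P,
      ((∀ U : Set P, υ.IsOpen U → x ∈ U → ∃ d ∈ D, ∀ e ∈ D, d ≤ e → e ∈ U) ↔
        x ∈ lowerBounds (upperBounds D)) := by
  intro D hne hdir x
  subst hυ
  let _ := generateFrom {U : Set P | ∃ y : P, U = (Set.Iic y)ᶜ}
  calc (∀ U : Set P, IsOpen U → x ∈ U → ∃ d ∈ D, ∀ e ∈ D, d ≤ e → e ∈ U)
      ↔ Tendsto ((↑) : D → P) atTop (𝓝 x) := (hdir.tendsto_val_atTop_nhds_iff hne).symm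
    _ ↔ ∀ y : P, ¬x ≤ y → ∃ d ∈ D, ∀ e ∈ D, d ≤ e → ¬e ≤ y := by
      simp only [tendsto_nhds_generateFrom_iff, Set.mem_ofPred_eq, forall_exists_index,
        forall_eq_apply_imp_iff, Set.mem_compl_iff, Set.mem_Iic,
        hdir.preimage_val_mem_atTop_iff hne]
    _ ↔ x ∈ lowerBounds (upperBounds D) := by
      simp only [exists_tail_not_le_iff_notMem_upperBounds, not_imp_not]
      rfl
end

section
/- Let X be a T0 topological space. A subset U of X is open in the topology S(X) determined by the convergence class S_X if and only if U is open in the directed topology d(X). Here S_X consists of pairs ((x_i)_{i∈I}, x) such that some directed set D of eventual lower bounds of the net (x_i) converges to x in X. -/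
/-- The specialization order of a topological space: `x ≤ y` iff `x ∈ closure {y}`. -/
def specLe {X : Type} [TopologicalSpace X] (x y : X) : Prop := x ∈ closure {y}

/-- Convergence of a directed subset `D` (viewed as a monotone net indexed by itself)
to a point `x`. -/
def dirConv {X : Type} [TopologicalSpace X] (D : Set X) (x : X) : Prop :=
  ∀ V : Set X, IsOpen V → x ∈ V → ∃ d ∈ D, ∀ e ∈ D, specLe d e → e ∈ V

/-- `U` is directed-open: for every directed subset `D` (w.r.t. the specialization
order) converging to some `x ∈ U`, `D` meets `U`. -/
def DOpen {X : Type} [TopologicalSpace X] (U : Set X) : Prop :=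
  ∀ (D : Set X) (x : X), D.Nonempty → DirectedOn specLe D → dirConv D x → x ∈ U →
    (D ∩ U).Nonempty

/-- `y` is an eventual lower bound of the net `n`. -/
def eventualLB {X : Type} [TopologicalSpace X] (n : PNet X) (y : X) : Prop :=
  ∃ k, ∀ i, n.le k i → specLe y (n.toFun i)

/-- The pair `(n, x)` is in the class `S_X`: some directed set of eventual lower
bounds of `n` converges to `x`. -/
def SPair {X : Type} [TopologicalSpace X] (n : PNet X) (x : X) : Prop :=
  ∃ D : Set X, D.Nonempty ∧ DirectedOn specLe D ∧ (∀ d ∈ D, eventualLB n d) ∧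
    dirConv D x

section

variable {X : Type} [TopologicalSpace X]

theorem specLe_iff_specializes {x y : X} : specLe x y ↔ y ⤳ x :=
  specializes_iff_mem_closure.symm

theorem specLe_refl (x : X) : specLe x x :=
  specLe_iff_specializes.2 specializes_rfl

theorem specLe_trans {x y z : X} (hxy : specLe x y) (hyz : specLe y z) : specLe x z :=
  specLe_iff_specializes.2 <|
    (specLe_iff_specializes.1 hyz).trans (specLe_iff_specializes.1 hxy)

theorem dirConv_singleton {x y : X} (hxy : specLe x y) : dirConv {y} x := by
  intro V hV hxV
  refine ⟨y, rfl, fun e he _ => ?_⟩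
  rw [Set.mem_singleton_iff.1 he]
  exact (specLe_iff_specializes.1 hxy).mem_open hV hxV

theorem DOpen.mem_of_specLe {U : Set X} (hU : DOpen U) {x y : X} (hx : x ∈ U)
    (hxy : specLe x y) : y ∈ U := by
  obtain ⟨z, hz, hzU⟩ := hU {y} x (Set.singleton_nonempty y)
    (@directedOn_singleton _ _ ⟨specLe_refl⟩ y) (dirConv_singleton hxy) hx
  rwa [Set.mem_singleton_iff.1 hz] at hzU

def PNet.ofDirectedOn (D : Set X) (hne : D.Nonempty)
    (hdir : DirectedOn specLe D) : PNet X where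
  ι := D
  le d e := specLe d.1 e.1
  refl d := specLe_refl d.1
  trans _ _ _ := specLe_trans
  nonempty := hne.to_subtype
  directed i j := by
    obtain ⟨k, hk, hik, hjk⟩ := hdir i.1 i.2 j.1 j.2
    exact ⟨⟨k, hk⟩, hik, hjk⟩
  toFun d := d.1

theorem sPair_ofDirectedOn {D : Set X} (hne : D.Nonempty)
    (hdir : DirectedOn specLe D) {x : X} (hconv : dirConv D x) :
    SPair (PNet.ofDirectedOn D hne hdir) x :=
  ⟨D, hne, hdir, fun d hd => ⟨⟨d, hd⟩, fun _ hi => hi⟩, hconv⟩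

end

theorem stmt15_general {X : Type} [TopologicalSpace X] :
    ∀ U : Set X,
      (∀ (n : PNet X) (x : X), SPair n x → x ∈ U → n.Eventually U) ↔ DOpen U := by
  intro U
  constructor
  · intro hU D x hne hdir hconv hxU
    obtain ⟨j, hj⟩ := hU _ x (sPair_ofDirectedOn hne hdir hconv) hxU
    exact ⟨j.1, j.2, hj j (specLe_refl j.1)⟩
  · rintro hU n x ⟨D, hne, hdir, hlb, hconv⟩ hxU
    obtain ⟨d, hdD, hdU⟩ := hU D x hne hdir hconv hxU
    obtain ⟨k, hk⟩ := hlb d hdD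
    exact ⟨k, fun i hi => hU.mem_of_specLe hdU (hk i hi)⟩

/-- For a `T0` space `X`: `U` is open in the topology `S(X)` determined by the
convergence class `S_X` iff `U` is open in the directed topology `d(X)`. -/
theorem stmt15 {X : Type} [TopologicalSpace X] [T0Space X] :
    ∀ U : Set X,
      (∀ (n : PNet X) (x : X), SPair n x → x ∈ U → n.Eventually U) ↔ DOpen U :=
  stmt15_general
end

section
/- Let X be a continuous space (c-space): for every x ∈ X there is a directed subset D with D → x, sup D = x, and d ≪_n x for all d ∈ D, where d ≪_n x means every net converging to x has some element above d. Then for every net (x_i)_{i∈I} in X converging to x, there exists a directed set D of eventual lower bounds of (x_i) with D → x; i.e., the pair ((x_i), x) belongs to the class S_X. -/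
/-- `d ≪ₙ x`: every net converging to `x` has some element above `d`. -/
def wbn {X : Type} [TopologicalSpace X] (d x : X) : Prop :=
  ∀ n : PNet X, n.ConvTo x → ∃ i, specLe d (n.toFun i)

/-! If `d ≪ₙ x` and `d` were not eventually below a net converging to `x`, the indices `i`
with `d ≰ xᵢ` would be cofinal and hence carry a subnet, still converging to `x`, with no
element above `d`. So the directed set approximating `x` in a c-space consists of eventual
lower bounds of every net converging to `x`. -/

namespace PNet

variable {X : Type}

def restrict (n : PNet X) (p : n.ι → Prop) (hp : ∀ k, ∃ i, n.le k i ∧ p i) : PNet X where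
  ι := {i // p i}
  le i j := n.le i.1 j.1
  refl i := n.refl i.1
  trans _ _ _ := n.trans _ _ _
  nonempty :=
    let ⟨k⟩ := n.nonempty
    let ⟨i, _, hi⟩ := hp k
    ⟨⟨i, hi⟩⟩
  directed i j := by
    obtain ⟨k, hik, hjk⟩ := n.directed i.1 j.1
    obtain ⟨l, hkl, hl⟩ := hp k
    exact ⟨⟨l, hl⟩, n.trans _ _ _ hik hkl, n.trans _ _ _ hjk hkl⟩
  toFun i := n.toFun i.1

theorem ConvTo.restrict [TopologicalSpace X] {n : PNet X} {x : X} (hn : n.ConvTo x)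
    (p : n.ι → Prop) (hp : ∀ k, ∃ i, n.le k i ∧ p i) : (n.restrict p hp).ConvTo x := by
  intro U hU hxU
  obtain ⟨j, hj⟩ := hn U hU hxU
  obtain ⟨i, hji, hi⟩ := hp j
  exact ⟨⟨i, hi⟩, fun k hik => hj k.1 (n.trans _ _ _ hji hik)⟩

end PNet

theorem eventualLB_of_wbn {X : Type} [TopologicalSpace X] {d x : X} (hd : wbn d x)
    {n : PNet X} (hn : n.ConvTo x) : eventualLB n d := by
  by_contra h
  have hcofinal : ∀ k, ∃ i, n.le k i ∧ ¬ specLe d (n.toFun i) := by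
    simpa only [eventualLB, not_exists, not_forall, exists_prop] using h
  obtain ⟨⟨i, hi⟩, hdi⟩ := hd _ (hn.restrict _ hcofinal)
  exact hi hdi

theorem stmt16_general {X : Type} [TopologicalSpace X]
    (hc : ∀ x : X, ∃ D : Set X, D.Nonempty ∧ DirectedOn specLe D ∧ dirConv D x ∧
      ((∀ d ∈ D, specLe d x) ∧ ∀ y : X, (∀ d ∈ D, specLe d y) → specLe x y) ∧
      ∀ d ∈ D, wbn d x) :
    ∀ (n : PNet X) (x : X), n.ConvTo x → SPair n x := by
  intro n x hn
  obtain ⟨D, hDne, hDdir, hDconv, -, hwbn⟩ := hc x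
  exact ⟨D, hDne, hDdir, fun d hd => eventualLB_of_wbn (hwbn d hd) hn, hDconv⟩

/-- Let `X` be a continuous space (c-space): for every `x ∈ X` there is a directed
subset `D` with `D → x`, `sup D = x` (in the specialization order) and `d ≪ₙ x` for
all `d ∈ D`. Then for every net converging to `x`, some directed set of eventual
lower bounds of the net converges to `x`; i.e. the pair belongs to `S_X`. -/
theorem stmt16 {X : Type} [TopologicalSpace X] [T0Space X]
    (hc : ∀ x : X, ∃ D : Set X, D.Nonempty ∧ DirectedOn specLe D ∧ dirConv D x ∧
      ((∀ d ∈ D, specLe d x) ∧ ∀ y : X, (∀ d ∈ D, specLe d y) → specLe x y) ∧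
      ∀ d ∈ D, wbn d x) :
    ∀ (n : PNet X) (x : X), n.ConvTo x → SPair n x :=
  stmt16_general hc
end

section
/- Let X be a directed space (a T0 space in which every directed-open set is open) such that the convergence class S_X is topological, i.e., S_X contains every pair of a convergent net and its limit in the topology S(X). Then X is a continuous space: for every x ∈ X there exists a directed subset D with D → x and d ≪_n x for every d ∈ D. -/
/-!
Take the net of all points of all open neighbourhoods of `x`, ordered by reverse inclusion of
the neighbourhood; it converges to `x`. Since convergent nets lie in `S_X`, some directed set
`D → x` consists of eventual lower bounds of this net, i.e. each `d ∈ D` lies below every point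
of some open neighbourhood of `x`. Then every net converging to `x` eventually enters that
neighbourhood, so `d ≪ₙ x`.
-/

section

variable {X : Type} [TopologicalSpace X]

def nbhdNet (x : X) : PNet X where
  ι := {p : Set X × X // IsOpen p.1 ∧ x ∈ p.1 ∧ p.2 ∈ p.1}
  le a b := b.val.1 ⊆ a.val.1
  refl _ := subset_rfl
  trans _ _ _ hij hjk := hjk.trans hij
  nonempty := ⟨⟨(Set.univ, x), isOpen_univ, trivial, trivial⟩⟩
  directed a b :=
    ⟨⟨(a.val.1 ∩ b.val.1, x), a.2.1.inter b.2.1, ⟨a.2.2.1, b.2.2.1⟩, ⟨a.2.2.1, b.2.2.1⟩⟩,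
      Set.inter_subset_left, Set.inter_subset_right⟩
  toFun p := p.val.2

theorem nbhdNet_convTo (x : X) : (nbhdNet x).ConvTo x :=
  fun U hU hxU => ⟨⟨(U, x), hU, hxU, hxU⟩, fun k hk => hk k.2.2.2⟩

theorem exists_isOpen_of_eventualLB_nbhdNet {x d : X} (hd : eventualLB (nbhdNet x) d) :
    ∃ U : Set X, IsOpen U ∧ x ∈ U ∧ ∀ b ∈ U, specLe d b := by
  obtain ⟨⟨⟨U, _⟩, hU, hxU, _⟩, hlb⟩ := hd
  exact ⟨U, hU, hxU, fun b hb => hlb ⟨(U, b), hU, hxU, hb⟩ subset_rfl⟩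

theorem wbn_of_isOpen {x d : X} {U : Set X} (hU : IsOpen U) (hxU : x ∈ U)
    (hdU : ∀ b ∈ U, specLe d b) : wbn d x := by
  intro n hn
  obtain ⟨j, hj⟩ := hn U hU hxU
  exact ⟨j, hdU _ (hj j (n.refl j))⟩

end

theorem stmt17_general {X : Type}
    (TS : TopologicalSpace X)
    (htop : ∀ (n : PNet X) (x : X),
      (∀ U : Set X, TS.IsOpen U → x ∈ U → n.Eventually U) → SPair n x) :
    ∀ x : X, ∃ D : Set X, D.Nonempty ∧ DirectedOn specLe D ∧ dirConv D x ∧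
      ∀ d ∈ D, wbn d x := by
  intro x
  obtain ⟨D, hne, hdir, hlb, hconv⟩ := htop (nbhdNet x) x (nbhdNet_convTo x)
  refine ⟨D, hne, hdir, hconv, fun d hd => ?_⟩
  obtain ⟨U, hU, hxU, hdU⟩ := exists_isOpen_of_eventualLB_nbhdNet (hlb d hd)
  exact wbn_of_isOpen hU hxU hdU

/-- Let `X` be a directed space (a `T0` space in which every directed-open set is
open) whose convergence class `S_X` is topological: `S_X` contains every pair of a
convergent net and its limit in the topology `S(X)` determined by `S_X`. Then `X` is
a continuous space: for every `x` there is a directed `D` with `D → x` and `d ≪ₙ x`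
for all `d ∈ D`. -/
theorem stmt17 {X : Type} [TopologicalSpace X] [T0Space X]
    (hdirected : ∀ U : Set X, DOpen U ↔ IsOpen U)
    (TS : TopologicalSpace X)
    (hTS : ∀ U : Set X, TS.IsOpen U ↔
      ∀ (n : PNet X) (x : X), SPair n x → x ∈ U → n.Eventually U)
    (htop : ∀ (n : PNet X) (x : X),
      (∀ U : Set X, TS.IsOpen U → x ∈ U → n.Eventually U) → SPair n x) :
    ∀ x : X, ∃ D : Set X, D.Nonempty ∧ DirectedOn specLe D ∧ dirConv D x ∧
      ∀ d ∈ D, wbn d x :=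
  stmt17_general TS htop
end
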